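/- There exists a constant C > 0 (one may take C = π/√6) such that for every real number w, ∑_{k ∈ ℤ, k ≠ 0} |J_k(w)| ≤ C·|w|. -/

import Mathlib

/-!
`J_k(w)` is the real part of the `k`-th Fourier coefficient `c_k` of `u ↦ exp(i w sin u)` on
`[-π, π]`. Its derivative `i w cos u · exp(i w sin u)` has Fourier coefficients `i k c_k`, so
Parseval gives `∑ k² |c_k|² = (2π)⁻¹ ∫ w² cos² u du = w² / 2`. Cauchy–Schwarz against
`∑_{k ≠ 0} 1 / k² = π² / 3` then bounds `∑_{k ≠ 0} |c_k|` by `(π / √3) · (|w| / √2) = π |w| / √6`.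
-/

open MeasureTheory Filter Set
open scoped Topology

/-- Bessel function of the first kind of integer order `n`, defined via the integral
`J_n(x) = (1/(2π)) ∫_{-π}^{π} exp(i(x sin u − n u)) du` (whose value is real). -/
noncomputable def besselJ (n : ℤ) (x : ℝ) : ℝ :=
  ((2 * Real.pi : ℂ)⁻¹ *
    ∫ u in (-Real.pi)..Real.pi,
      Complex.exp (Complex.I * ((x : ℂ) * (Real.sin u : ℂ) - (n : ℂ) * (u : ℂ)))).re

open Complex Real
open scoped Interval

theorem Real.summable_mul_and_tsum_mul_le_sqrt_mul_sqrt {ι : Type*} {f g : ι → ℝ}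
    (hf : ∀ i, 0 ≤ f i) (hg : ∀ i, 0 ≤ g i)
    (hf₂ : Summable fun i => f i ^ 2) (hg₂ : Summable fun i => g i ^ 2) :
    (Summable fun i => f i * g i) ∧
      ∑' i, f i * g i ≤ √(∑' i, f i ^ 2) * √(∑' i, g i ^ 2) := by
  simp only [← rpow_natCast] at hf₂ hg₂ ⊢
  simpa only [sqrt_eq_rpow, Nat.cast_ofNat, one_div] using
    summable_and_inner_le_Lp_mul_Lq_tsum_of_nonneg .two_two hf hg hf₂ hg₂

theorem hasSum_one_div_int_sq_ne_zero :
    HasSum (fun k : {k : ℤ // k ≠ 0} => 1 / (k : ℝ) ^ 2) (π ^ 2 / 3) := by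
  have hsum_nat : HasSum (fun n : ℕ => 1 / ((n + 1 : ℕ) : ℝ) ^ 2) (π ^ 2 / 6) := by
    simpa using (hasSum_nat_add_iff' 1).mpr hasSum_zeta_two
  have hsum_int := HasSum.of_add_one_of_neg_add_one (f := fun k : ℤ => 1 / (k : ℝ) ^ 2)
    (m' := π ^ 2 / 6) (by simpa using hsum_nat)
    (by convert hsum_nat using 2 with n; push_cast; ring)
  refine (hasSum_subtype_iff_indicator (f := fun k : ℤ => 1 / (k : ℝ) ^ 2)
    (s := {k : ℤ | k ≠ 0})).mpr ?_
  -- the `k = 0` term is `1 / 0 = 0`, so the indicator does not change the function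
  rw [(indicator_eq_self (s := {k : ℤ | k ≠ 0})).mpr fun k hk h0 => hk (by simp [h0])]
  convert hsum_int using 1
  simp only [Int.cast_zero, ne_eq, OfNat.ofNat_ne_zero, not_false_eq_true, zero_pow, div_zero]
  ring

theorem fourierCoeffOn_deriv_of_eq {a b : ℝ} (hab : a < b) {f f' : ℝ → ℂ} {n : ℤ} (hn : n ≠ 0)
    (hf : ∀ x ∈ [[a, b]], HasDerivAt f (f' x) x) (hf' : IntervalIntegrable f' volume a b)
    (hfab : f a = f b) :
    fourierCoeffOn hab f' n = 2 * π * I * n / (b - a) * fourierCoeffOn hab f n := by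
  rw [fourierCoeffOn_of_hasDerivAt hab hn hf hf', hfab, sub_self, mul_zero, zero_sub]
  have : (b - a : ℂ) ≠ 0 := by norm_cast; linarith
  field_simp

theorem neg_pi_lt_pi : -π < π := neg_lt_self pi_pos

noncomputable def expISin (w u : ℝ) : ℂ := exp (I * (w * Real.sin u))

theorem hasDerivAt_expISin (w u : ℝ) :
    HasDerivAt (expISin w) (I * w * Real.cos u * expISin w u) u := by
  have h := ((((Real.hasDerivAt_sin u).ofReal_comp).const_mul (w : ℂ)).const_mul I).cexp
  unfold expISin
  convert h using 1
  ring

theorem besselJ_eq_re_fourierCoeffOn (n : ℤ) (w : ℝ) :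
    besselJ n w = (fourierCoeffOn neg_pi_lt_pi (expISin w) n).re := by
  rw [besselJ, fourierCoeffOn_eq_integral, real_smul]
  congr 2
  · push_cast; ring
  · refine intervalIntegral.integral_congr fun u _ => ?_
    rw [fourier_coe_apply, expISin, smul_eq_mul, ← Complex.exp_add]
    congr 1
    have : (π : ℂ) ≠ 0 := by exact_mod_cast pi_ne_zero
    push_cast
    field_simp
    ring

theorem fourierCoeffOn_deriv_expISin (w : ℝ) {n : ℤ} (hn : n ≠ 0) :
    fourierCoeffOn neg_pi_lt_pi (fun u => I * w * Real.cos u * expISin w u) n =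
      I * n * fourierCoeffOn neg_pi_lt_pi (expISin w) n := by
  rw [fourierCoeffOn_deriv_of_eq neg_pi_lt_pi hn (fun u _ => hasDerivAt_expISin w u)
    (by apply Continuous.intervalIntegrable; unfold expISin; fun_prop)
    (by simp [expISin])]
  have : (π : ℂ) ≠ 0 := by exact_mod_cast pi_ne_zero
  push_cast
  field_simp
  ring

theorem hasSum_sq_norm_fourierCoeffOn_deriv_expISin (w : ℝ) :
    HasSum (fun n => ‖fourierCoeffOn neg_pi_lt_pi
      (fun u => I * w * Real.cos u * expISin w u) n‖ ^ 2) (w ^ 2 / 2) := by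
  have hnorm (u : ℝ) : ‖I * w * Real.cos u * expISin w u‖ = |w| * |Real.cos u| := by
    simp [expISin, norm_exp, -Complex.ofReal_cos]
  have hL2 : MemLp (fun u => I * w * Real.cos u * expISin w u) 2
      (volume.restrict (Ioc (-π) π)) := by
    refine MemLp.of_bound (by unfold expISin; fun_prop) |w| (ae_of_all _ fun u => ?_)
    rw [hnorm]
    exact mul_le_of_le_one_right (abs_nonneg w) (abs_cos_le_one u)
  convert hasSum_sq_fourierCoeffOn neg_pi_lt_pi hL2 using 1
  simp only [hnorm, mul_pow, sq_abs, intervalIntegral.integral_const_mul, integral_cos_sq]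
  simp only [sub_neg_eq_add, Real.sin_pi, Real.sin_neg, mul_zero, neg_zero, sub_self, zero_add,
    add_self_div_two, smul_eq_mul]
  field_simp
  ring

theorem summable_and_tsum_sq_mul_norm_fourierCoeffOn_expISin_le (w : ℝ) :
    (Summable fun k : {k : ℤ // k ≠ 0} =>
        (|(k : ℝ)| * ‖fourierCoeffOn neg_pi_lt_pi (expISin w) k‖) ^ 2) ∧
      ∑' k : {k : ℤ // k ≠ 0},
        (|(k : ℝ)| * ‖fourierCoeffOn neg_pi_lt_pi (expISin w) k‖) ^ 2 ≤ w ^ 2 / 2 := by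
  have hparseval := hasSum_sq_norm_fourierCoeffOn_deriv_expISin w
  have hterm (k : {k : ℤ // k ≠ 0}) :
      (|(k : ℝ)| * ‖fourierCoeffOn neg_pi_lt_pi (expISin w) k‖) ^ 2 =
        ‖fourierCoeffOn neg_pi_lt_pi (fun u => I * w * Real.cos u * expISin w u) k‖ ^ 2 := by
    rw [fourierCoeffOn_deriv_expISin w k.2, norm_mul, norm_mul, norm_I, one_mul, norm_intCast]
  simp only [hterm]
  exact ⟨hparseval.summable.subtype _, hparseval.tsum_eq ▸
    hparseval.summable.tsum_subtype_le _ {k | k ≠ 0} fun _ => sq_nonneg _⟩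

/-- There is a constant `C > 0` (e.g. `C = π/√6`) such that for every real `w`,
`∑_{k ∈ ℤ, k ≠ 0} |J_k(w)| ≤ C |w|`. -/
theorem sum_abs_besselJ_le : ∃ C : ℝ, 0 < C ∧ ∀ w : ℝ,
    Summable (fun k : {k : ℤ // k ≠ 0} => |besselJ (k : ℤ) w|) ∧
    ∑' k : {k : ℤ // k ≠ 0}, |besselJ (k : ℤ) w| ≤ C * |w| := by
  refine ⟨π / √6, by positivity, fun w => ?_⟩
  set c := fourierCoeffOn neg_pi_lt_pi (expISin w)
  obtain ⟨hc_summable, hc_le⟩ := summable_and_tsum_sq_mul_norm_fourierCoeffOn_expISin_le w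
  have hinv : HasSum (fun k : {k : ℤ // k ≠ 0} => (1 / |(k : ℝ)|) ^ 2) (π ^ 2 / 3) := by
    simpa only [div_pow, one_pow, sq_abs] using hasSum_one_div_int_sq_ne_zero
  obtain ⟨hprod, hCS⟩ := Real.summable_mul_and_tsum_mul_le_sqrt_mul_sqrt
    (fun _ => by positivity) (fun _ => by positivity) hinv.summable hc_summable
  have hJ (k : {k : ℤ // k ≠ 0}) : |besselJ k w| ≤ 1 / |(k : ℝ)| * (|(k : ℝ)| * ‖c k‖) := by
    have : (k : ℝ) ≠ 0 := Int.cast_ne_zero.mpr k.2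
    rw [besselJ_eq_re_fourierCoeffOn, one_div, inv_mul_cancel_left₀ (abs_ne_zero.mpr this)]
    exact abs_re_le_norm _
  have hsummable := hprod.of_nonneg_of_le (fun _ => abs_nonneg _) hJ
  refine ⟨hsummable, ?_⟩
  calc ∑' k : {k : ℤ // k ≠ 0}, |besselJ k w|
      ≤ ∑' k : {k : ℤ // k ≠ 0}, 1 / |(k : ℝ)| * (|(k : ℝ)| * ‖c k‖) :=
        hsummable.tsum_le_tsum hJ hprod
    _ ≤ √(π ^ 2 / 3) * √(w ^ 2 / 2) := by
        rw [← hinv.tsum_eq]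
        exact hCS.trans (by gcongr)
    _ = π / √6 * |w| := by
        rw [sqrt_div (sq_nonneg _), sqrt_div (sq_nonneg _), sqrt_sq pi_pos.le, sqrt_sq_eq_abs,
          show (6 : ℝ) = 3 * 2 by norm_num, sqrt_mul (by norm_num)]
        ring
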